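/- A c.e. set A is Turing complete (∅' ≤_T A) if and only if A computes a fixed point free function, i.e. a total function f with W_{f(n)} ≠ W_n for all n. -/

import Mathlib

/-!
`∅'` computes a fixed point free function: by the recursion theorem there is a computable `r`
with `φ_{r n}` constantly equal to `φ_n(0)`, so `r n ∈ ∅' ↔ 0 ∈ W_n`, and `∅'` can output an
index of `∅` or of `ℕ` accordingly.

Conversely (Arslanov), let `A = W_a` be c.e. and `f = Φ^A` fixed point free. By the recursion
theorem there is a computable `e` such that `φ_{e k}` waits for the stage `u` at which `k`
enters `∅'` and then copies `φ_w` for `w = Φ^{A_u ↾ u}(e k)`. Given `k`, the oracle `A` finds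
`l` and `s` such that `Φ^{A ↾ l}(e k)` converges by stage `s` and `A_s ↾ l = A ↾ l`. Then
`k ∈ ∅'` iff `k` is in `∅'` by stage `max l s`: if `k` entered at a later stage `u`, then
`A_u ↾ u` would extend `A ↾ l` since `A` is c.e., so `W_{e k} = W_{f (e k)}` by the use principle.
-/

/-- The `e`-th partial computable function in a standard numbering
satisfying the S-m-n theorem. -/
def phi (e : ℕ) : ℕ →. ℕ := (Denumerable.ofNat Nat.Partrec.Code e).eval

/-- The `e`-th computably enumerable set `W e = dom (phi e)`. -/
def W (e : ℕ) : Set ℕ := {n | (phi e n).Dom}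

/-- Partial functions computable relative to an oracle `O`. -/
inductive RecursiveInSingle (O : ℕ →. ℕ) : (ℕ →. ℕ) → Prop
  | oracle : RecursiveInSingle O O
  | zero : RecursiveInSingle O (pure 0)
  | succ : RecursiveInSingle O Nat.succ
  | left : RecursiveInSingle O ↑fun n : ℕ => n.unpair.1
  | right : RecursiveInSingle O ↑fun n : ℕ => n.unpair.2
  | pair {f g} : RecursiveInSingle O f → RecursiveInSingle O g →
      RecursiveInSingle O fun n => Nat.pair <$> f n <*> g n
  | comp {f g} : RecursiveInSingle O f → RecursiveInSingle O g → RecursiveInSingle O fun n => g n >>= f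
  | prec {f g} : RecursiveInSingle O f → RecursiveInSingle O g → RecursiveInSingle O (Nat.unpaired fun a n =>
      n.rec (f a) fun y IH => do let i ← IH; g (Nat.pair a (Nat.pair y i)))
  | rfind {f} : RecursiveInSingle O f →
      RecursiveInSingle O fun a => Nat.rfind fun n => (fun m => m = 0) <$> f (Nat.pair a n)

open scoped Classical in
/-- The characteristic function of a set, as an oracle. -/
noncomputable def charFn (A : Set ℕ) : ℕ →. ℕ := fun n => Part.some (if n ∈ A then 1 else 0)

/-- Turing reducibility for sets: `A ≤_T B`. -/
def TuringRed (A B : Set ℕ) : Prop := RecursiveInSingle (charFn B) (charFn A)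

/-- `A` computes the total function `f`, i.e. `f ≤_T A`. -/
def FunRecIn (A : Set ℕ) (f : ℕ → ℕ) : Prop := RecursiveInSingle (charFn A) fun n => Part.some (f n)

/-- The halting set ∅′. -/
def Khalt : Set ℕ := {n | (phi n n).Dom}

open Encodable Filter
open Nat.Partrec (Code)
open Nat.Partrec.Code
open scoped Computability

namespace RecursiveInSingle

variable {O f : ℕ →. ℕ}

theorem iff_turingReducible : RecursiveInSingle O f ↔ f ≤ᵀ O := by
  rw [TuringReducible, RecursiveIn.iff_nat]
  constructor
  · intro h
    induction h with
    | oracle => exact .oracle O rfl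
    | zero => exact .zero
    | succ => exact .succ
    | left => exact .left
    | right => exact .right
    | pair _ _ hf hg => exact .pair hf hg
    | comp _ _ hf hg => exact .comp hf hg
    | prec _ _ hf hg => exact .prec hf hg
    | rfind _ hf => exact .rfind hf
  · intro h
    induction h with
    | oracle g hg => exact (Set.mem_singleton_iff.1 hg) ▸ .oracle
    | zero => exact .zero
    | succ => exact .succ
    | left => exact .left
    | right => exact .right
    | pair _ _ hf hg => exact .pair hf hg
    | comp _ _ hf hg => exact .comp hf hg
    | prec _ _ hf hg => exact .prec hf hg
    | rfind _ hf => exact .rfind hf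

theorem trans {O' : ℕ →. ℕ} (hf : RecursiveInSingle O f) (hO : RecursiveInSingle O' O) :
    RecursiveInSingle O' f :=
  iff_turingReducible.2 <| (iff_turingReducible.1 hf).trans (iff_turingReducible.1 hO)

theorem of_computable {g : ℕ → ℕ} (hg : Computable g) :
    RecursiveInSingle O fun n => Part.some (g n) :=
  iff_turingReducible.2 hg.partrec.turingReducible

theorem of_eq {g : ℕ →. ℕ} (hf : RecursiveInSingle O f) (e : ∀ n, f n = g n) :
    RecursiveInSingle O g :=
  funext e ▸ hf

theorem comp_computable (hf : RecursiveInSingle O f) {g : ℕ → ℕ} (hg : Computable g) :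
    RecursiveInSingle O fun n => f (g n) :=
  (hf.comp (of_computable hg)).of_eq fun n => Part.bind_some (g n) f

theorem map₂ (hf : RecursiveInSingle O f) {h : ℕ → ℕ → ℕ} (hh : Computable₂ h) :
    RecursiveInSingle O fun n => (f n).map (h n) := by
  have hpair := (of_computable (O := O) Computable.id).pair hf
  have hh' : Computable fun q : ℕ => h q.unpair.1 q.unpair.2 :=
    hh.comp (Computable.fst.comp Computable.unpair) (Computable.snd.comp Computable.unpair)
  refine ((of_computable hh').comp hpair).of_eq fun n => ?_
  ext y
  simp [Seq.seq, Part.mem_bind_iff, Part.mem_map_iff, eq_comm]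

theorem comp₂ {β : Type*} [Primcodable β] {g : ℕ → β}
    (hg : RecursiveInSingle O fun n => Part.some (encode (g n))) {h : ℕ → β → ℕ}
    (hh : Computable₂ h) : RecursiveInSingle O fun n => Part.some (h n (g n)) := by
  have hh' : Computable₂ fun n m => ((decode (α := β) m).map (h n)).getD 0 :=
    (Computable.option_map (Computable.decode.comp Computable.snd)
      (hh.comp (Computable.fst.comp Computable.fst) Computable.snd).to₂).option_getD
      (Computable.const 0)
  exact (hg.map₂ hh').of_eq fun n => by simp

theorem rfind_map {β : Type*} [Primcodable β] {g : ℕ → β}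
    (hg : RecursiveInSingle O fun n => Part.some (encode (g n)))
    {b : ℕ → ℕ → β → Bool} (hb : Computable fun q : (ℕ × ℕ) × β => b q.1.1 q.1.2 q.2)
    {h : ℕ → ℕ → ℕ} (hh : Computable₂ h) :
    RecursiveInSingle O fun k => (Nat.rfind fun p => Part.some (b k p (g p))).map (h k) := by
  have hunpair : Computable fun m : ℕ => m.unpair := Computable.unpair
  have hbody := (hg.comp_computable (Computable.snd.comp hunpair)).comp₂
    (h := fun m y => bif b m.unpair.1 m.unpair.2 y then 0 else 1) <|
      Computable.cond (hb.comp (((Computable.fst.comp hunpair).pair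
        (Computable.snd.comp hunpair)).comp Computable.fst |>.pair Computable.snd))
        (Computable.const 0) (Computable.const 1)
  refine (hbody.rfind.of_eq fun k => ?_).map₂ hh
  congr; funext p
  simp only [Nat.unpair_pair, Part.map_eq_map, Part.map_some]
  cases b k p (g p) <;> rfl

end RecursiveInSingle

/-- Programs for `RecursiveInSingle`, so that one reduction can be run against different
oracles, in particular against finite approximations of its own. -/
inductive OracleCode
  | oracle | zero | succ | left | right
  | pair (cf cg : OracleCode) | comp (cf cg : OracleCode) | prec (cf cg : OracleCode)
  | rfind (cf : OracleCode)

namespace OracleCode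

def eval (O : ℕ →. ℕ) : OracleCode → ℕ → Part ℕ
  | oracle, n => O n
  | zero, _ => Part.some 0
  | succ, n => Part.some n.succ
  | left, n => Part.some n.unpair.1
  | right, n => Part.some n.unpair.2
  | pair cf cg, n => (eval O cf n).bind fun x => (eval O cg n).map (Nat.pair x)
  | comp cf cg, n => (eval O cg n).bind (eval O cf)
  | prec cf cg, n => n.unpair.2.rec (eval O cf n.unpair.1) fun y IH =>
      IH.bind fun i => eval O cg (Nat.pair n.unpair.1 (Nat.pair y i))
  | rfind cf, n => Nat.rfind fun m => (eval O cf (Nat.pair n m)).map (· = 0)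

theorem exists_eval_eq {O f : ℕ →. ℕ} (h : RecursiveInSingle O f) : ∃ c, eval O c = f := by
  induction h with
  | oracle => exact ⟨oracle, rfl⟩
  | zero => exact ⟨zero, rfl⟩
  | succ => exact ⟨succ, rfl⟩
  | left => exact ⟨left, rfl⟩
  | right => exact ⟨right, rfl⟩
  | pair _ _ hf hg => obtain ⟨cf, rfl⟩ := hf; obtain ⟨cg, rfl⟩ := hg; exact ⟨pair cf cg, rfl⟩
  | comp _ _ hf hg => obtain ⟨cf, rfl⟩ := hf; obtain ⟨cg, rfl⟩ := hg; exact ⟨comp cf cg, rfl⟩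
  | prec _ _ hf hg => obtain ⟨cf, rfl⟩ := hf; obtain ⟨cg, rfl⟩ := hg; exact ⟨prec cf cg, rfl⟩
  | rfind _ hf => obtain ⟨cf, rfl⟩ := hf; exact ⟨rfind cf, rfl⟩

/-- The use principle, in filter form: a convergent computation queries the oracle only
finitely often, so it converges to the same value along any family of oracles that eventually
answers each of those queries as `O` does. -/
theorem eventually_mem_eval {ι : Type*} {L : Filter ι} {O : ℕ →. ℕ} {Os : ι → ℕ →. ℕ}
    (hO : ∀ n y, y ∈ O n → ∀ᶠ i in L, y ∈ Os i n) (c : OracleCode) {n y : ℕ}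
    (hy : y ∈ eval O c n) : ∀ᶠ i in L, y ∈ eval (Os i) c n := by
  induction c generalizing n y with
  | oracle => exact hO n y hy
  | zero | succ | left | right => exact .of_forall fun _ => hy
  | pair cf cg ihf ihg =>
    simp only [eval, Part.mem_bind_iff, Part.mem_map_iff] at hy ⊢
    obtain ⟨x, hx, z, hz, rfl⟩ := hy
    filter_upwards [ihf hx, ihg hz] with i hxi hzi using ⟨x, hxi, z, hzi, rfl⟩
  | comp cf cg ihf ihg =>
    simp only [eval, Part.mem_bind_iff] at hy ⊢
    obtain ⟨x, hx, hyx⟩ := hy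
    filter_upwards [ihg hx, ihf hyx] with i hxi hyi using ⟨x, hxi, hyi⟩
  | prec cf cg ihf ihg =>
    simp only [eval] at hy ⊢
    generalize n.unpair.2 = m at hy ⊢
    induction m generalizing y with
    | zero => exact ihf hy
    | succ m ih =>
      obtain ⟨x, hx, hyx⟩ := Part.mem_bind_iff.1 hy
      filter_upwards [ih hx, ihg hyx] with i hxi hyi using Part.mem_bind_iff.2 ⟨x, hxi, hyi⟩
  | rfind cf ih =>
    simp only [eval] at hy ⊢
    obtain ⟨hy0, hlt⟩ := Nat.mem_rfind.1 hy
    obtain ⟨x, hx, hx0⟩ := Part.mem_map_iff _ |>.1 hy0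
    choose! z hz hz0 using fun m (hm : m < y) => (Part.mem_map_iff _).1 (hlt hm)
    have hall : ∀ᶠ i in L, ∀ m ∈ Set.Iio y, z m ∈ eval (Os i) cf (Nat.pair n m) :=
      (Set.finite_Iio y).eventually_all.2 fun m hm => ih (hz m hm)
    filter_upwards [ih hx, hall] with i hxi hzi
    exact Nat.mem_rfind.2 ⟨(Part.mem_map_iff _).2 ⟨x, hxi, hx0⟩,
      fun hm => (Part.mem_map_iff _).2 ⟨_, hzi _ hm, hz0 _ hm⟩⟩

theorem eval_mono {O O' : ℕ →. ℕ} (hO : ∀ n y, y ∈ O n → y ∈ O' n) (c : OracleCode) {n y : ℕ}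
    (hy : y ∈ eval O c n) : y ∈ eval O' c n :=
  eventually_pure.1 <| eventually_mem_eval (L := pure ()) (Os := fun _ => O')
    (fun n y h => eventually_pure.2 (hO n y h)) c hy

theorem partrec_eval {α : Type*} [Primcodable α] {R : α → ℕ →. ℕ} (hR : Partrec₂ R)
    (c : OracleCode) : Partrec₂ fun a n => eval (R a) c n := by
  induction c with
  | oracle => exact hR
  | zero => exact (Computable.const 0).partrec
  | succ => exact (Computable.succ.comp Computable.snd).partrec
  | left => exact (Computable.fst.comp (Computable.unpair.comp Computable.snd)).partrec
  | right => exact (Computable.snd.comp (Computable.unpair.comp Computable.snd)).partrec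
  | pair cf cg ihf ihg =>
    exact ihf.bind <| (ihg.comp (Computable.fst.comp Computable.fst)
      (Computable.snd.comp Computable.fst)).map
      (Primrec₂.natPair.comp (Primrec.snd.comp Primrec.fst) Primrec.snd).to_comp
  | comp cf cg ihf ihg =>
    exact ihg.bind (ihf.comp (Computable.fst.comp Computable.fst) Computable.snd)
  | prec cf cg ihf ihg =>
    have hsnd : Computable fun p : α × ℕ => p.2.unpair := Computable.unpair.comp Computable.snd
    have hstep : Partrec₂ fun (p : α × ℕ) (yi : ℕ × ℕ) =>
        eval (R p.1) cg (Nat.pair p.2.unpair.1 (Nat.pair yi.1 yi.2)) :=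
      ihg.comp (Computable.fst.comp Computable.fst)
        (Primrec₂.natPair.comp (Primrec.fst.comp (Primrec.unpair.comp
          (Primrec.snd.comp Primrec.fst)))
          (Primrec₂.natPair.comp (Primrec.fst.comp Primrec.snd)
            (Primrec.snd.comp Primrec.snd))).to_comp
    exact Partrec.nat_rec (Computable.snd.comp hsnd)
      (ihf.comp Computable.fst (Computable.fst.comp hsnd)) hstep
  | rfind cf ih =>
    refine Partrec.rfind ?_
    exact (ih.comp (Computable.fst.comp Computable.fst)
      (Primrec₂.natPair.comp (Primrec.snd.comp Primrec.fst) Primrec.snd).to_comp).map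
      (Primrec.eq.comp Primrec.snd (Primrec.const 0)).decide.to_comp

end OracleCode

def listOracle (σ : List ℕ) : ℕ →. ℕ := fun x => σ[x]?

def initSeg (χ : ℕ → ℕ) (l : ℕ) : List ℕ := (List.range l).map χ

theorem mem_listOracle_initSeg {χ : ℕ → ℕ} {l x y : ℕ} :
    y ∈ listOracle (initSeg χ l) x ↔ x < l ∧ χ x = y := by
  by_cases h : x < l <;> simp [listOracle, initSeg, h, eq_comm]

theorem partrec_listOracle : Partrec₂ listOracle :=
  Computable.ofOption Computable.list_getElem?

theorem initSeg_succ (χ : ℕ → ℕ) (l : ℕ) : initSeg χ (l + 1) = initSeg χ l ++ [χ l] := by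
  simp [initSeg, List.range_succ]

theorem RecursiveInSingle.initSeg (χ : ℕ → ℕ) :
    RecursiveInSingle (fun x => Part.some (χ x)) fun l => Part.some (encode (initSeg χ l)) := by
  have hstep := (RecursiveInSingle.oracle (O := fun x => Part.some (χ x))).comp_computable
    (Computable.fst.comp (Computable.unpair.comp (Computable.snd.comp Computable.unpair)))
    |>.map₂ (h := fun m v => encode ((decode (α := List ℕ) m.unpair.2.unpair.2).getD [] ++ [v]))
      ((Computable.encode.comp (Computable.list_concat.comp ((Computable.decode.comp
        (Computable.snd.comp (Computable.unpair.comp (Computable.snd.comp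
          (Computable.unpair.comp Computable.fst))))).option_getD (Computable.const []))
          Computable.snd)))
  have hrec := (RecursiveInSingle.prec (of_computable (Computable.const (encode ([] : List ℕ))))
    hstep).comp_computable (Primrec₂.natPair.comp (Primrec.const 0) Primrec.id).to_comp
  refine hrec.of_eq fun l => ?_
  simp only [Nat.unpaired, Nat.unpair_pair, id]
  induction l with
  | zero => rfl
  | succ l ih => simp only [ih]; simp [initSeg_succ]

theorem OracleCode.eventually_mem_eval_initSeg {χ : ℕ → ℕ} (c : OracleCode) {n y : ℕ}
    (hy : y ∈ c.eval (fun x => Part.some (χ x)) n) :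
    ∀ᶠ l in atTop, y ∈ c.eval (listOracle (initSeg χ l)) n :=
  c.eventually_mem_eval (fun x _ hx => (eventually_gt_atTop x).mono fun _ hl =>
    mem_listOracle_initSeg.2 ⟨hl, (Part.mem_some_iff.1 hx).symm⟩) hy

theorem charFn_eq_indicator (A : Set ℕ) : charFn A = fun x => Part.some (A.indicator 1 x) := rfl

theorem partrec_phi : Partrec₂ phi :=
  eval_part.comp ((Computable.ofNat Code).comp Computable.fst) Computable.snd

theorem exists_mem_W_iff_dom {α σ : Type*} [Primcodable α] [Primcodable σ] {f : α →. σ}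
    (hf : Partrec f) : ∃ d, ∀ a, encode a ∈ W d ↔ (f a).Dom := by
  obtain ⟨c, hc⟩ := exists_code.1 hf
  exact ⟨encode c, fun a => by simp [W, phi, hc, encodek]⟩

theorem exists_primrec_fixed_point {ψ : ℕ → ℕ → ℕ →. ℕ}
    (hψ : Partrec fun p : ℕ × ℕ × ℕ => ψ p.1 p.2.1 p.2.2) :
    ∃ e : ℕ → ℕ, Primrec e ∧ ∀ k x, phi (e k) x = ψ k (e k) x := by
  have hfst : Computable fun p : Code × ℕ => p.2.unpair.1 :=
    Computable.fst.comp (Computable.unpair.comp Computable.snd)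
  obtain ⟨c, hc⟩ := fixed_point₂ (f := fun cod m => ψ m.unpair.1 (encode (cod.curry m.unpair.1))
    m.unpair.2) <| hψ.comp <| hfst.pair <|
      (Computable.encode.comp (primrec₂_curry.to_comp.comp Computable.fst hfst)).pair
      (Computable.snd.comp (Computable.unpair.comp Computable.snd))
  refine ⟨fun k => encode (c.curry k),
    Primrec.encode.comp (primrec₂_curry.comp (Primrec.const c) Primrec.id), fun k x => ?_⟩
  simp [phi, eval_curry, hc]

/-- `x ∈ W_{e,s}`: the computation of `φ_e(x)` halts within `s` steps. -/
def enumStage (e s x : ℕ) : Bool := (evaln s (Denumerable.ofNat Code e) x).isSome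

theorem enumStage_mono {e s s' x : ℕ} (h : s ≤ s') (hs : enumStage e s x) : enumStage e s' x := by
  simp only [enumStage, Option.isSome_iff_exists] at hs ⊢
  exact hs.imp fun _ => evaln_mono h

theorem mem_W_of_enumStage {e s x : ℕ} (hs : enumStage e s x) : x ∈ W e := by
  obtain ⟨y, hy⟩ := Option.isSome_iff_exists.1 hs
  exact Part.dom_iff_mem.2 ⟨y, evaln_sound hy⟩

theorem mem_W_iff_eventually_enumStage {e x : ℕ} :
    x ∈ W e ↔ ∀ᶠ s in atTop, enumStage e s x := by
  refine ⟨fun hx => ?_, fun hs => mem_W_of_enumStage hs.exists.choose_spec⟩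
  obtain ⟨y, hy⟩ := Part.dom_iff_mem.1 hx
  obtain ⟨s, hs⟩ := evaln_complete.1 hy
  exact eventually_atTop.2 ⟨s, fun s' h => enumStage_mono h (Option.isSome_iff_exists.2 ⟨y, hs⟩)⟩

theorem Primrec.enumStage {α : Type*} [Primcodable α] {e s x : α → ℕ} (he : Primrec e)
    (hs : Primrec s) (hx : Primrec x) : Primrec fun a => _root_.enumStage (e a) (s a) (x a) :=
  Primrec.option_isSome.comp (primrec_evaln.comp ((hs.pair ((Primrec.ofNat Code).comp he)).pair hx))

theorem exists_funRecIn_Khalt_fpf : ∃ f, FunRecIn Khalt f ∧ ∀ n, W (f n) ≠ W n := by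
  obtain ⟨i, hi⟩ := exists_mem_W_iff_dom (Partrec.none : Partrec fun _ : ℕ => (Part.none : Part ℕ))
  obtain ⟨j, hj⟩ := exists_mem_W_iff_dom (Partrec.some : Partrec fun n : ℕ => Part.some n)
  simp only [encode_nat, Part.not_none_dom, iff_false, Part.some_dom, iff_true] at hi hj
  obtain ⟨r, hr, hphi⟩ := exists_primrec_fixed_point (ψ := fun n _ _ => phi n 0)
    (partrec_phi.comp Computable.fst (Computable.const 0))
  have hrK : ∀ n, r n ∈ Khalt ↔ 0 ∈ W n := fun n => by
    simp only [Khalt, W, Set.mem_ofPred_eq, hphi]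
  classical
  refine ⟨fun n => if r n ∈ Khalt then i else j, ?_, fun n hn => ?_⟩
  · refine ((RecursiveInSingle.oracle.comp_computable hr.to_comp).map₂
      (h := fun _ b => if b = 1 then i else j)
      (Primrec.ite (Primrec.eq.comp Primrec.snd (Primrec.const 1)) (Primrec.const i)
        (Primrec.const j)).to_comp).of_eq fun n => ?_
    by_cases h : r n ∈ Khalt <;> simp [charFn, h]
  · have h0 := Set.ext_iff.1 hn 0
    simp only [hrK] at h0
    by_cases h : 0 ∈ W n <;> simp [h, hi, hj] at h0

section Arslanov

variable (a : ℕ)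

def stageChar (s x : ℕ) : ℕ := (enumStage a s x).toNat

theorem Primrec.initSeg_stageChar {α : Type*} [Primcodable α] {s l : α → ℕ} (hs : Primrec s)
    (hl : Primrec l) : Primrec fun x => initSeg (stageChar a (s x)) (l x) :=
  Primrec.list_map (Primrec.list_range.comp hl) <| Primrec.cond
    (Primrec.enumStage (Primrec.const a) (hs.comp Primrec.fst) Primrec.snd)
    (Primrec.const 1) (Primrec.const 0)

/-- `ψ k i x` waits for the stage `u` at which `k` enters `∅'`, runs the oracle program `c` on
`i` with the stage-`u` approximation of `W a` below `u` as oracle, and then runs the program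
`w` it outputs on `x`. -/
def arslanovFn (c : OracleCode) (k i x : ℕ) : Part ℕ :=
  (Nat.rfind fun t => Part.some (enumStage k t k)).bind fun u =>
    (c.eval (listOracle (initSeg (stageChar a u) u)) i).bind fun w => phi w x

theorem partrec_arslanovFn (c : OracleCode) :
    Partrec fun p : ℕ × ℕ × ℕ => arslanovFn a c p.1 p.2.1 p.2.2 := by
  have hstage : Partrec fun p : ℕ × ℕ × ℕ => Nat.rfind fun t => Part.some (enumStage p.1 t p.1) :=
    Partrec.rfind (Primrec.enumStage (Primrec.fst.comp Primrec.fst) Primrec.snd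
      (Primrec.fst.comp Primrec.fst)).to_comp.partrec
  have hseg : Primrec fun q : (ℕ × ℕ × ℕ) × ℕ => initSeg (stageChar a q.2) q.2 :=
    Primrec.initSeg_stageChar a Primrec.snd Primrec.snd
  have hrun := (OracleCode.partrec_eval partrec_listOracle c).comp hseg.to_comp
    (Computable.fst.comp (Computable.snd.comp Computable.fst))
  exact hstage.bind (hrun.bind (partrec_phi.comp Computable.snd
    (Computable.snd.comp (Computable.snd.comp (Computable.fst.comp Computable.fst)))))

/-- With `W d` the set of pairs `(σ, i)` on which the reduction converges with oracle `σ`: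
by stage `s` the reduction with oracle `σ` is seen to converge on `e k`, and `σ` is the
stage-`s` approximation of `W a` below `l`. -/
def certifies (d : ℕ) (e : ℕ → ℕ) (k l s : ℕ) (σ : List ℕ) : Bool :=
  enumStage d s (encode (σ, e k)) && decide (initSeg (stageChar a s) l = σ)

variable {a}

theorem stageChar_eq_indicator_of_le {s u x : ℕ} (hsu : s ≤ u)
    (hs : stageChar a s x = (W a).indicator 1 x) : stageChar a u x = (W a).indicator 1 x := by
  by_cases hx : x ∈ W a
  · have : enumStage a s x := by simpa [stageChar, hx] using hs
    simp [stageChar, hx, enumStage_mono hsu this]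
  · have : ¬ enumStage a u x := fun h => hx (mem_W_of_enumStage h)
    simp [stageChar, hx, this]

theorem eventually_initSeg_stageChar (l : ℕ) :
    ∀ᶠ s in atTop, initSeg (stageChar a s) l = initSeg ((W a).indicator 1) l := by
  have hx : ∀ x ∈ Set.Iio l, ∀ᶠ s in atTop, stageChar a s x = (W a).indicator 1 x := by
    intro x _
    by_cases hx : x ∈ W a
    · filter_upwards [mem_W_iff_eventually_enumStage.1 hx] with s hs
      simp [stageChar, hx, hs]
    · refine .of_forall fun s => ?_
      have : ¬ enumStage a s x := fun h => hx (mem_W_of_enumStage h)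
      simp [stageChar, hx, this]
  filter_upwards [(Set.finite_Iio l).eventually_all.2 hx] with s hs
  exact List.map_congr_left fun x hxl => hs x (List.mem_range.1 hxl)

variable {f : ℕ → ℕ} {c : OracleCode}

/-- If `k` entered `∅'` only after stage `max l s`, then at that stage the approximation of
`W a` extends the correct initial segment below `l`, so `φ (e k)` copies `φ (f (e k))`. -/
theorem enumStage_of_mem_Khalt (hfpf : ∀ n, W (f n) ≠ W n)
    (hc : ∀ n, c.eval (charFn (W a)) n = Part.some (f n)) {e : ℕ → ℕ}
    (he : ∀ k x, phi (e k) x = arslanovFn a c k (e k) x) {k l s : ℕ} (hk : k ∈ Khalt)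
    (hdom : (c.eval (listOracle (initSeg ((W a).indicator 1) l)) (e k)).Dom)
    (hagree : initSeg (stageChar a s) l = initSeg ((W a).indicator 1) l) :
    enumStage k (max l s) k := by
  classical
  by_contra hlate
  have hK : ∃ t, enumStage k t k := (mem_W_iff_eventually_enumStage.1 hk).exists
  have hu : max l s < Nat.find hK :=
    lt_of_not_ge fun h => hlate (enumStage_mono h (Nat.find_spec hK))
  have hrfind : Nat.find hK ∈ Nat.rfind fun t => Part.some (enumStage k t k) :=
    Nat.mem_rfind.2 ⟨by simpa using Nat.find_spec hK, fun hm => by simpa using Nat.find_min hK hm⟩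
  obtain ⟨w, hw⟩ := Part.dom_iff_mem.1 hdom
  have hwf : w = f (e k) := by
    have := c.eval_mono (O' := charFn (W a)) (fun x y hy => ?_) hw
    · rwa [hc, Part.mem_some_iff] at this
    · obtain ⟨-, rfl⟩ := mem_listOracle_initSeg.1 hy
      exact Part.mem_some _
  have hwu : w ∈ c.eval (listOracle (initSeg (stageChar a (Nat.find hK)) (Nat.find hK))) (e k) := by
    refine c.eval_mono (fun x y hy => ?_) hw
    obtain ⟨hxl, rfl⟩ := mem_listOracle_initSeg.1 hy
    have hs := List.map_inj_left.1 hagree x (List.mem_range.2 hxl)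
    exact mem_listOracle_initSeg.2 ⟨by omega, stageChar_eq_indicator_of_le (by omega) hs⟩
  have hphi : ∀ x, phi (e k) x = phi (f (e k)) x := fun x => by
    rw [he, arslanovFn, Part.eq_some_iff.2 hrfind, Part.bind_some, Part.eq_some_iff.2 hwu,
      Part.bind_some, hwf]
  exact hfpf (e k) (Set.ext fun x => by simp only [W, Set.mem_ofPred_eq, hphi]).symm

theorem exists_certifies (hc : ∀ n, c.eval (charFn (W a)) n = Part.some (f n)) {d : ℕ}
    (hd : ∀ q : List ℕ × ℕ, encode q ∈ W d ↔ (c.eval (listOracle q.1) q.2).Dom) (e : ℕ → ℕ)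
    (k : ℕ) : ∃ l s, certifies a d e k l s (initSeg ((W a).indicator 1) l) := by
  have hy : f (e k) ∈ c.eval (fun x => Part.some ((W a).indicator 1 x)) (e k) := by
    rw [← charFn_eq_indicator, hc]; exact Part.mem_some _
  obtain ⟨l, hl⟩ := (c.eventually_mem_eval_initSeg hy).exists
  have hdom := (hd (initSeg ((W a).indicator 1) l, e k)).2 (Part.dom_iff_mem.2 ⟨_, hl⟩)
  obtain ⟨s, hs, hagree⟩ :=
    ((mem_W_iff_eventually_enumStage.1 hdom).and (eventually_initSeg_stageChar (a := a) l)).exists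
  refine ⟨l, s, ?_⟩
  simp only [certifies, Bool.and_eq_true, decide_eq_true_eq]
  exact ⟨hs, hagree⟩

theorem primrec_certifies (d : ℕ) {e : ℕ → ℕ} (he : Primrec e) :
    Primrec fun q : (ℕ × ℕ) × List ℕ => certifies a d e q.1.1 q.1.2.unpair.1 q.1.2.unpair.2 q.2 :=
  have hunpair : Primrec fun q : (ℕ × ℕ) × List ℕ => q.1.2.unpair :=
    Primrec.unpair.comp (Primrec.snd.comp Primrec.fst)
  Primrec.and.comp (Primrec.enumStage (Primrec.const d) (Primrec.snd.comp hunpair)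
      (Primrec.encode.comp (Primrec.snd.pair (he.comp (Primrec.fst.comp Primrec.fst)))))
    (Primrec.eq.comp (Primrec.initSeg_stageChar a (Primrec.snd.comp hunpair)
      (Primrec.fst.comp hunpair)) Primrec.snd).decide

theorem rfind_certifies_map_eq_charFn_Khalt (hfpf : ∀ n, W (f n) ≠ W n)
    (hc : ∀ n, c.eval (charFn (W a)) n = Part.some (f n)) {d : ℕ}
    (hd : ∀ q : List ℕ × ℕ, encode q ∈ W d ↔ (c.eval (listOracle q.1) q.2).Dom) {e : ℕ → ℕ}
    (he : ∀ k x, phi (e k) x = arslanovFn a c k (e k) x) (k : ℕ) :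
    (Nat.rfind fun p => Part.some (certifies a d e k p.unpair.1 p.unpair.2
        (initSeg ((W a).indicator 1) p.unpair.1))).map
      (fun p => (enumStage k (max p.unpair.1 p.unpair.2) k).toNat) = charFn Khalt k := by
  obtain ⟨l, s, hcert⟩ := exists_certifies hc hd e k
  obtain ⟨p, hp, -⟩ := Nat.rfind_min'
    (p := fun p => certifies a d e k p.unpair.1 p.unpair.2 (initSeg ((W a).indicator 1) p.unpair.1))
    (m := Nat.pair l s) (by simpa using hcert)
  have hspec := (Part.mem_some_iff.1 (Nat.rfind_spec hp)).symm
  simp only [certifies, Bool.and_eq_true, decide_eq_true_eq] at hspec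
  obtain ⟨hhalt, hagree⟩ := hspec
  refine Part.eq_some_iff.2 ((Part.mem_map_iff _).2 ⟨p, hp, ?_⟩)
  by_cases hk : k ∈ Khalt
  · simp [hk, enumStage_of_mem_Khalt hfpf hc he hk ((hd _).1 (mem_W_of_enumStage hhalt)) hagree]
  · have hlate : ¬ enumStage k (max p.unpair.1 p.unpair.2) k := fun h => hk (mem_W_of_enumStage h)
    simp [hk, hlate]

theorem turingRed_Khalt_of_fpf (hf : FunRecIn (W a) f) (hfpf : ∀ n, W (f n) ≠ W n) :
    TuringRed Khalt (W a) := by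
  obtain ⟨c, hc⟩ := OracleCode.exists_eval_eq hf
  replace hc : ∀ n, c.eval (charFn (W a)) n = Part.some (f n) := congrFun hc
  obtain ⟨e, he, hfix⟩ := exists_primrec_fixed_point (partrec_arslanovFn a c)
  obtain ⟨d, hd⟩ := exists_mem_W_iff_dom (OracleCode.partrec_eval partrec_listOracle c)
  have hout : Primrec₂ fun k p : ℕ => (enumStage k (max p.unpair.1 p.unpair.2) k).toNat :=
    Primrec.cond (Primrec.enumStage Primrec.fst (Primrec.nat_max.comp
        (Primrec.fst.comp (Primrec.unpair.comp Primrec.snd))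
        (Primrec.snd.comp (Primrec.unpair.comp Primrec.snd))) Primrec.fst)
      (Primrec.const 1) (Primrec.const 0)
  have hsearch := RecursiveInSingle.rfind_map
    (g := fun p => initSeg ((W a).indicator 1) p.unpair.1)
    ((RecursiveInSingle.initSeg _).comp_computable (Computable.fst.comp Computable.unpair))
    (b := fun k p σ => certifies a d e k p.unpair.1 p.unpair.2 σ) (primrec_certifies d he).to_comp
    (h := fun k p => (enumStage k (max p.unpair.1 p.unpair.2) k).toNat) hout.to_comp
  rw [← charFn_eq_indicator] at hsearch
  exact hsearch.of_eq (rfind_certifies_map_eq_charFn_Khalt hfpf hc hd hfix)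

end Arslanov

/-- A c.e. set is Turing complete iff it computes a fixed point free function. -/
theorem ce_complete_iff_computes_fpf (A : Set ℕ) (hce : ∃ e : ℕ, W e = A) :
    TuringRed Khalt A ↔ ∃ f : ℕ → ℕ, FunRecIn A f ∧ ∀ n : ℕ, W (f n) ≠ W n := by
  obtain ⟨a, rfl⟩ := hce
  constructor
  · intro hK
    obtain ⟨f, hf, hfpf⟩ := exists_funRecIn_Khalt_fpf
    exact ⟨f, RecursiveInSingle.trans hf hK, hfpf⟩
  · rintro ⟨f, hf, hfpf⟩
    exact turingRed_Khalt_of_fpf hf hfpf
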